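/- (Lemma of Section 2.4, q-case: q-factorial moments of the negative q-binomial distribution of the second kind.) Let n ≥ 1 be a natural number, β ∈ (0,1) and m ∈ ℕ. Then the series ∑_{t=0}^{∞} [t]_{m,q} · C_q(n+t−1, t) · β^{t} · ⟨1⊖β⟩_{n} converges, with sum equal to [n+m−1]_{m,q} · β^{m} / ∏_{i=1}^{m} (1 − β·q^{n+i−1}). -/

import Mathlib

open Finset

/-- q-integer `[k]_q = (1 - q^k)/(1 - q)`. -/
noncomputable def qInt (q : ℝ) (k : ℤ) : ℝ := (1 - q ^ k) / (1 - q)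

/-- q-factorial `[n]_q! = ∏_{i=1}^n [i]_q`. -/
noncomputable def qFact (q : ℝ) (n : ℕ) : ℝ := ∏ i ∈ Finset.Icc 1 n, qInt q (i : ℤ)

/-- q-binomial coefficient `C_q(n,k)`. -/
noncomputable def qBinom (q : ℝ) (n k : ℕ) : ℝ := qFact q n / (qFact q k * qFact q (n - k))

/-- q-falling factorial `[u]_{m,q} = ∏_{i=1}^m [u-i+1]_q`. -/
noncomputable def qFall (q : ℝ) (u : ℤ) (m : ℕ) : ℝ := ∏ i ∈ Finset.Icc 1 m, qInt q (u - (i : ℤ) + 1)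

/-- `[k]_{q⁻¹} = q^{1-k} · [k]_q`. -/
noncomputable def qIntInv (q : ℝ) (k : ℤ) : ℝ := q ^ (1 - k) * qInt q k

/-- `[u]_{m,q⁻¹} = ∏_{i=1}^m [u-i+1]_{q⁻¹}`. -/
noncomputable def qFallInv (q : ℝ) (u : ℤ) (m : ℕ) : ℝ := ∏ i ∈ Finset.Icc 1 m, qIntInv q (u - (i : ℤ) + 1)

/-- `b(k) = k(k-1)/2`. -/
def bb (k : ℕ) : ℕ := k * (k - 1) / 2

/-- `⟨1 ⊕ α⟩_m = ∏_{i=1}^m (1 + α q^{i-1})`. -/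
noncomputable def oplus (q α : ℝ) (m : ℕ) : ℝ := ∏ i ∈ Finset.Icc 1 m, (1 + α * q ^ (i - 1))

/-- `⟨1 ⊖ β⟩_m = ∏_{i=1}^m (1 - β q^{i-1})`. -/
noncomputable def ominus (q β : ℝ) (m : ℕ) : ℝ := ∏ i ∈ Finset.Icc 1 m, (1 - β * q ^ (i - 1))

/-- q-trinomial coefficient `T_q(n; x₁, x₂)`. -/
noncomputable def qTri (q : ℝ) (n x1 x2 : ℕ) : ℝ :=
  qFact q n / (qFact q x1 * qFact q x2 * qFact q (n - x1 - x2))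


/-! Terms with `t < m` vanish, since `[t]_{m,q}` contains the factor `[0]_q = 0`. For `t = s + m`
one has `[s+m]_{m,q} C_q(n+s+m-1, s+m) = [n+m-1]_{m,q} C_q(n+m-1+s, s)`, so the series is a
multiple of the q-negative-binomial series `∑ₛ C_q(M+s, s) βˢ = 1 / ⟨1⊖β⟩_{M+1}` with `M = n+m-1`.
That series is summed by induction on `M`: the q-Pascal rule gives the recurrence
`S_{M+1} (1 - β q^{M+1}) = S_M` between consecutive sums. Finally
`⟨1⊖β⟩_n / ⟨1⊖β⟩_{n+m} = 1 / ∏ᵢ (1 - β q^{n+i-1})`. -/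

variable {q β : ℝ}

lemma qInt_natCast (k : ℕ) : qInt q k = (1 - q ^ k) / (1 - q) := by
  simp [qInt]

lemma qInt_zero : qInt q 0 = 0 := by simp [qInt]

lemma qInt_natCast_add (a b : ℕ) : qInt q (a + b : ℕ) = qInt q a + q ^ a * qInt q b := by
  simp only [qInt_natCast, pow_add]
  ring

lemma qInt_natCast_pos (hq0 : 0 ≤ q) (hq1 : q < 1) {k : ℕ} (hk : k ≠ 0) : 0 < qInt q k := by
  have : q ^ k < 1 := pow_lt_one₀ hq0 hq1 hk
  rw [qInt_natCast]
  apply div_pos <;> linarith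

lemma qInt_natCast_le (hq0 : 0 ≤ q) (hq1 : q < 1) (k : ℕ) : qInt q k ≤ 1 / (1 - q) := by
  have : 0 ≤ q ^ k := pow_nonneg hq0 k
  rw [qInt_natCast]
  gcongr
  linarith

lemma one_le_qInt_natCast (hq0 : 0 ≤ q) (hq1 : q < 1) {k : ℕ} (hk : k ≠ 0) :
    1 ≤ qInt q k := by
  have : q ^ k ≤ q := pow_le_of_le_one hq0 hq1.le hk
  rw [qInt_natCast, le_div_iff₀ (by linarith)]
  linarith

lemma qFact_zero : qFact q 0 = 1 := by simp [qFact]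

lemma qFact_succ (n : ℕ) : qFact q (n + 1) = qFact q n * qInt q (n + 1 : ℕ) := by
  rw [qFact, prod_Icc_succ_top (by omega)]
  rfl

lemma qFact_pos (hq0 : 0 ≤ q) (hq1 : q < 1) (n : ℕ) : 0 < qFact q n :=
  prod_pos fun i hi => qInt_natCast_pos hq0 hq1 (by grind)

lemma one_le_qFact (hq0 : 0 ≤ q) (hq1 : q < 1) (n : ℕ) : 1 ≤ qFact q n :=
  Finset.one_le_prod fun i hi => one_le_qInt_natCast hq0 hq1 (by grind)

lemma qBinom_add (a b : ℕ) : qBinom q (a + b) b = qFact q (a + b) / (qFact q b * qFact q a) := by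
  rw [qBinom, Nat.add_sub_cancel]

lemma qBinom_zero_right (hq0 : 0 ≤ q) (hq1 : q < 1) (n : ℕ) : qBinom q n 0 = 1 := by
  rw [qBinom, qFact_zero, one_mul, Nat.sub_zero, div_self (qFact_pos hq0 hq1 n).ne']

lemma qBinom_self (hq0 : 0 ≤ q) (hq1 : q < 1) (n : ℕ) : qBinom q n n = 1 := by
  rw [qBinom, Nat.sub_self, qFact_zero, mul_one, div_self (qFact_pos hq0 hq1 n).ne']

/-- The q-Pascal rule, from `[M + s + 2] = [M + 1] + q ^ (M + 1) [s + 1]`. -/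
lemma qBinom_pascal (hq0 : 0 ≤ q) (hq1 : q < 1) (M s : ℕ) :
    qBinom q (M + 1 + (s + 1)) (s + 1)
      = q ^ (M + 1) * qBinom q (M + 1 + s) s + qBinom q (M + (s + 1)) (s + 1) := by
  have hsplit := qInt_natCast_add (q := q) (M + 1) (s + 1)
  rw [qBinom_add, qBinom_add, qBinom_add, show M + 1 + (s + 1) = M + 1 + s + 1 by omega,
    show M + (s + 1) = M + 1 + s by omega, qFact_succ (M + 1 + s), qFact_succ s, qFact_succ M,
    show M + 1 + s + 1 = M + 1 + (s + 1) by omega, hsplit]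
  have := (qFact_pos hq0 hq1 s).ne'
  have := (qFact_pos hq0 hq1 M).ne'
  have := (qInt_natCast_pos hq0 hq1 (k := s + 1) (by omega)).ne'
  have := (qInt_natCast_pos hq0 hq1 (k := M + 1) (by omega)).ne'
  field_simp
  ring

lemma qFall_succ (u : ℤ) (m : ℕ) : qFall q u (m + 1) = qFall q u m * qInt q (u - m) := by
  rw [qFall, prod_Icc_succ_top (by omega), ← qFall]
  congr 2
  push_cast
  ring

lemma qFall_natCast_of_lt {t m : ℕ} (h : t < m) : qFall q t m = 0 :=
  prod_eq_zero (i := t + 1) (by simp; omega) (by simp [qInt_zero])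

lemma qFall_add_mul_qFact (k m : ℕ) : qFall q (k + m : ℕ) m * qFact q k = qFact q (k + m) := by
  induction m generalizing k with
  | zero => simp [qFall]
  | succ m ih =>
    rw [qFall_succ, show ((k + (m + 1) : ℕ) : ℤ) - m = (k + 1 : ℕ) by push_cast; ring,
      mul_assoc, mul_comm (qInt q _), ← qFact_succ, show k + (m + 1) = k + 1 + m by omega, ih]

lemma qFall_add_pos (hq0 : 0 ≤ q) (hq1 : q < 1) (k m : ℕ) : 0 < qFall q (k + m : ℕ) m := by
  refine prod_pos fun i hi => ?_
  rw [show ((k + m : ℕ) : ℤ) - i + 1 = (k + m + 1 - i : ℕ) by grind]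
  exact qInt_natCast_pos hq0 hq1 (by grind)

lemma qFall_add_le (hq0 : 0 ≤ q) (hq1 : q < 1) (k m : ℕ) :
    qFall q (k + m : ℕ) m ≤ (1 / (1 - q)) ^ m := by
  calc qFall q (k + m : ℕ) m ≤ ∏ _i ∈ Icc 1 m, 1 / (1 - q) := by
        refine prod_le_prod (fun i hi => ?_) (fun i hi => ?_) <;>
          rw [show ((k + m : ℕ) : ℤ) - i + 1 = (k + m + 1 - i : ℕ) by grind]
        · exact (qInt_natCast_pos hq0 hq1 (by grind)).le
        · exact qInt_natCast_le hq0 hq1 _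
    _ = (1 / (1 - q)) ^ m := by simp

lemma qBinom_nonneg (hq0 : 0 ≤ q) (hq1 : q < 1) (n k : ℕ) : 0 ≤ qBinom q n k :=
  have := qFact_pos hq0 hq1
  div_nonneg (this n).le (mul_pos (this k) (this (n - k))).le

lemma qBinom_add_le (hq0 : 0 ≤ q) (hq1 : q < 1) (M s : ℕ) :
    qBinom q (M + s) s ≤ (1 / (1 - q)) ^ M := by
  have hs := (qFact_pos hq0 hq1 s).ne'
  calc qBinom q (M + s) s = qFall q (s + M : ℕ) M / qFact q M := by
        rw [qBinom_add, add_comm M, ← qFall_add_mul_qFact]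
        field_simp
    _ ≤ qFall q (s + M : ℕ) M := div_le_self (qFall_add_pos hq0 hq1 s M).le (one_le_qFact hq0 hq1 M)
    _ ≤ (1 / (1 - q)) ^ M := qFall_add_le hq0 hq1 s M

lemma one_sub_mul_pow_pos (hq0 : 0 ≤ q) (hq1 : q ≤ 1) (hβ : β < 1) (k : ℕ) :
    0 < 1 - β * q ^ k := by
  rcases le_total 0 β with hβ0 | hβ0
  · have := mul_le_of_le_one_right hβ0 (pow_le_one₀ (n := k) hq0 hq1)
    linarith
  · have := mul_nonpos_of_nonpos_of_nonneg hβ0 (pow_nonneg hq0 k)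
    linarith

lemma ominus_succ (n : ℕ) : ominus q β (n + 1) = ominus q β n * (1 - β * q ^ n) := by
  rw [ominus, prod_Icc_succ_top (by omega)]
  simp [ominus]

lemma ominus_pos (hq0 : 0 ≤ q) (hq1 : q ≤ 1) (hβ : β < 1) (n : ℕ) : 0 < ominus q β n :=
  prod_pos fun i _ => one_sub_mul_pow_pos hq0 hq1 hβ (i - 1)

lemma ominus_add (n m : ℕ) :
    ominus q β (n + m) = ominus q β n * ∏ i ∈ Icc 1 m, (1 - β * q ^ (n + i - 1)) := by
  induction m with
  | zero => simp
  | succ m ih =>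
    rw [← add_assoc, ominus_succ, ih, prod_Icc_succ_top (by omega),
      show n + (m + 1) - 1 = n + m by omega, mul_assoc]

lemma HasSum.mul_one_sub_eq_of_succ {K : Type*} [CommRing K] [TopologicalSpace K]
    [IsTopologicalRing K] [T2Space K] {f g : ℕ → K} {c a b : K} (hf : HasSum f a)
    (hg : HasSum g b) (h0 : f 0 = g 0) (hrec : ∀ s, f (s + 1) = c * f s + g (s + 1)) :
    a * (1 - c) = b := by
  have hshift := (hasSum_nat_add_iff' 1).mpr hf
  simp only [hrec] at hshift
  have := hshift.unique ((hf.mul_left c).add ((hasSum_nat_add_iff' 1).mpr hg))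
  simp only [sum_range_one, h0] at this
  linear_combination this

lemma summable_qBinom_mul_pow (hq0 : 0 ≤ q) (hq1 : q < 1) (hβ : 0 ≤ β) (hβ' : β < 1) (M : ℕ) :
    Summable fun s => qBinom q (M + s) s * β ^ s :=
  .of_nonneg_of_le (fun s => mul_nonneg (qBinom_nonneg hq0 hq1 _ _) (pow_nonneg hβ s))
    (fun s => mul_le_mul_of_nonneg_right (qBinom_add_le hq0 hq1 M s) (pow_nonneg hβ s))
    ((summable_geometric_of_lt_one hβ hβ').mul_left _)

theorem hasSum_qBinom_mul_pow (hq0 : 0 ≤ q) (hq1 : q < 1) (hβ : 0 ≤ β) (hβ' : β < 1) (M : ℕ) :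
    HasSum (fun s => qBinom q (M + s) s * β ^ s) (ominus q β (M + 1))⁻¹ := by
  induction M with
  | zero =>
    simpa [qBinom_self hq0 hq1, ominus] using hasSum_geometric_of_lt_one hβ hβ'
  | succ M ih =>
    obtain ⟨a, ha⟩ := summable_qBinom_mul_pow hq0 hq1 hβ hβ' (M + 1)
    have hrel := ha.mul_one_sub_eq_of_succ ih (c := β * q ^ (M + 1))
      (by simp [qBinom_zero_right hq0 hq1]) (fun s => by rw [qBinom_pascal hq0 hq1]; ring)
    have := one_sub_mul_pow_pos hq0 hq1.le hβ' (M + 1)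
    convert ha
    rw [ominus_succ, mul_inv, ← hrel, mul_inv_cancel_right₀ this.ne']

lemma qFall_mul_qBinom (hq0 : 0 ≤ q) (hq1 : q < 1) (N s m : ℕ) :
    qFall q (s + m : ℕ) m * qBinom q (N + (s + m)) (s + m)
      = qFall q (N + m : ℕ) m * qBinom q (N + m + s) s := by
  have := (qFact_pos hq0 hq1 s).ne'
  have := (qFact_pos hq0 hq1 N).ne'
  have := (qFall_add_pos hq0 hq1 s m).ne'
  have := (qFall_add_pos hq0 hq1 N m).ne'
  rw [qBinom_add, qBinom_add, ← qFall_add_mul_qFact s m, ← qFall_add_mul_qFact N m,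
    show N + m + s = N + (s + m) by omega]
  field_simp

theorem stmt15 (q : ℝ) (hq0 : 0 < q) (hq1 : q < 1) (n : ℕ) (hn : 1 ≤ n) (β : ℝ)
    (hβ : 0 < β) (hβ' : β < 1) (m : ℕ) :
    HasSum (fun t : ℕ =>
        qFall q (t : ℤ) m * qBinom q (n + t - 1) t * β ^ t * ominus q β n)
      (qFall q ((n : ℤ) + (m : ℤ) - 1) m * β ^ m /
        ∏ i ∈ Finset.Icc 1 m, (1 - β * q ^ (n + i - 1))) := by
  obtain ⟨N, rfl⟩ : ∃ N, n = N + 1 := ⟨n - 1, by omega⟩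
  have hseries := (hasSum_qBinom_mul_pow hq0.le hq1 hβ.le hβ' (N + m)).mul_left
    (qFall q (N + m : ℕ) m * β ^ m * ominus q β (N + 1))
  have hvalue : qFall q (N + m : ℕ) m * β ^ m * ominus q β (N + 1) * (ominus q β (N + m + 1))⁻¹
      = qFall q ((N + 1 : ℕ) + (m : ℤ) - 1) m * β ^ m /
        ∏ i ∈ Icc 1 m, (1 - β * q ^ (N + 1 + i - 1)) := by
    have := (ominus_pos hq0.le hq1.le hβ' (N + 1)).ne'
    rw [show N + m + 1 = N + 1 + m by omega, ominus_add (N + 1) m,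
      show ((N + 1 : ℕ) : ℤ) + m - 1 = (N + m : ℕ) by push_cast; ring]
    field_simp
  rw [← hvalue]
  refine ((add_left_injective m).hasSum_iff fun t ht => ?_).mp ?_
  · have htm : t < m := by
      by_contra! h
      exact ht ⟨t - m, by simp only; omega⟩
    rw [qFall_natCast_of_lt htm]
    ring
  · refine hseries.congr_fun fun s => ?_
    rw [Function.comp_apply, show N + 1 + (s + m) - 1 = N + (s + m) by omega,
      qFall_mul_qBinom hq0.le hq1]
    ring
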